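/- arXiv:1311.2748 — 4 statements merged into one kernel-verified Lean document; each statement's English description precedes it below -/
import Mathlib

section
/- Let H be a graph of order n with a complete dominating induced matching M of size m (0 < 2m < n). Then the spectral radius of the signless Laplacian matrix Q(H) = D(H) + A(H) equals (2 + n + √((2+n)² − 16m))/2. -/
open Matrix Finset
open scoped Classical

def edgesShare {V : Type*} (e f : Sym2 V) : Prop := ∃ v, v ∈ e ∧ v ∈ f

def matchedVert {V : Type*} (M : Finset (Sym2 V)) (v : V) : Prop := ∃ e ∈ M, v ∈ e

/-- `M` is a set of edges of `G`, pairwise not sharing end-vertices. -/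
def IsMatchingSet {V : Type*} (G : SimpleGraph V) (M : Finset (Sym2 V)) : Prop :=
  (∀ e ∈ M, e ∈ G.edgeSet) ∧ ∀ e ∈ M, ∀ f ∈ M, e ≠ f → ¬ edgesShare e f

/-- Dominating induced matching: every edge of `G` is in `M` or shares an
end-vertex with exactly one edge of `M`. -/
def IsDIM {V : Type*} (G : SimpleGraph V) (M : Finset (Sym2 V)) : Prop :=
  IsMatchingSet G M ∧ ∀ e ∈ G.edgeSet, e ∉ M → ∃! f, f ∈ M ∧ edgesShare e f

/-- Induced matching: the subgraph induced by the matched vertices consists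
exactly of the edges of `M`. -/
def IsInducedMatching {V : Type*} (G : SimpleGraph V) (M : Finset (Sym2 V)) : Prop :=
  IsMatchingSet G M ∧ ∀ e ∈ G.edgeSet, (∀ v ∈ e, matchedVert M v) → e ∈ M

/-- Complete dominating induced matching: a DIM such that the set of unmatched
vertices is nonempty and every matched vertex is adjacent to every unmatched vertex,
i.e. `E(G) = M ∪ {xy : x ∈ V(M), y ∉ V(M)}`. -/
def IsCompleteDIM {V : Type*} (G : SimpleGraph V) (M : Finset (Sym2 V)) : Prop :=
  IsDIM G M ∧ (∃ v, ¬ matchedVert M v) ∧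
    ∀ x y : V, matchedVert M x → ¬ matchedVert M y → G.Adj x y

/-! The matched vertices (there are `2m` of them) and the unmatched ones form an equitable
partition: a matched vertex is adjacent to its partner and to all `n - 2m` unmatched vertices, an
unmatched vertex to exactly the `2m` matched ones. Hence the vector equal to `μ - 2m` on matched
and `2m` on unmatched vertices is an eigenvector of `Q` whenever `μ² - (n + 2)μ + 4m = 0`. For the
larger root it is positive, and a positive eigenvector of a nonnegative symmetric matrix belongs
to its spectral radius. -/

theorem Matrix.mem_spectrum_iff_exists_mulVec_eq_smul {K ι : Type*} [Field K] [Fintype ι]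
    [DecidableEq ι] {A : Matrix ι ι K} {μ : K} :
    μ ∈ spectrum K A ↔ ∃ v ≠ 0, A *ᵥ v = μ • v := by
  rw [← spectrum_toLin', ← Module.End.hasEigenvalue_iff_mem_spectrum,
    Module.End.hasEigenvalue_iff, Submodule.ne_bot_iff]
  simp only [Module.End.mem_eigenspace_iff, toLin'_apply]
  exact ⟨fun ⟨v, hv, h0⟩ => ⟨v, h0, hv⟩, fun ⟨v, h0, hv⟩ => ⟨v, hv, h0⟩⟩

theorem Matrix.abs_le_of_mulVec_eq_smul_of_pos {ι : Type*} [Fintype ι] {A : Matrix ι ι ℝ}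
    (hA : A.IsSymm) (hA₀ : ∀ i j, 0 ≤ A i j) {x : ι → ℝ} (hx : ∀ i, 0 < x i) {μ : ℝ}
    (hxμ : A *ᵥ x = μ • x) {v : ι → ℝ} (hv : v ≠ 0) {μ' : ℝ} (hvμ' : A *ᵥ v = μ' • v) :
    |μ'| ≤ μ := by
  set w : ι → ℝ := fun j => |v j|
  have hw : ∀ i, |μ'| * w i ≤ (A *ᵥ w) i := fun i =>
    calc |μ'| * w i = |∑ j, A i j * v j| := by
          rw [← abs_mul, ← smul_eq_mul, ← Pi.smul_apply, ← hvμ']; rfl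
      _ ≤ ∑ j, |A i j * v j| := abs_sum_le_sum_abs _ _
      _ = (A *ᵥ w) i := by
          simp only [abs_mul, abs_of_nonneg (hA₀ i _)]; rfl
  have hxw : 0 < x ⬝ᵥ w := by
    obtain ⟨i, hi⟩ := Function.ne_iff.1 hv
    exact Finset.sum_pos' (fun j _ => mul_nonneg (hx j).le (abs_nonneg _))
      ⟨i, Finset.mem_univ i, mul_pos (hx i) (abs_pos.2 hi)⟩
  have hxAw : x ⬝ᵥ (A *ᵥ w) = μ * (x ⬝ᵥ w) := by
    rw [dotProduct_mulVec, ← mulVec_transpose, hA.eq, hxμ, smul_dotProduct, smul_eq_mul]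
  refine le_of_mul_le_mul_right ?_ hxw
  calc |μ'| * (x ⬝ᵥ w) = ∑ i, x i * (|μ'| * w i) := by
        rw [dotProduct, Finset.mul_sum]; congr! 1 with i; ring
    _ ≤ ∑ i, x i * (A *ᵥ w) i :=
        Finset.sum_le_sum fun i _ => mul_le_mul_of_nonneg_left (hw i) (hx i).le
    _ = μ * (x ⬝ᵥ w) := hxAw

namespace SimpleGraph

variable {V : Type*} (R : Type*) [Fintype V] [DecidableEq V] (G : SimpleGraph V)
  [DecidableRel G.Adj]

def signlessLapMatrix [AddMonoidWithOne R] : Matrix V V R :=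
  G.degMatrix R + G.adjMatrix R

theorem isSymm_signlessLapMatrix [AddMonoidWithOne R] : (G.signlessLapMatrix R).IsSymm :=
  G.isSymm_degMatrix R |>.add G.isSymm_adjMatrix

variable {R}

theorem signlessLapMatrix_nonneg [Semiring R] [PartialOrder R] [IsOrderedRing R] (i j : V) :
    0 ≤ G.signlessLapMatrix R i j := by
  rw [signlessLapMatrix, Matrix.add_apply, degMatrix, diagonal_apply, adjMatrix_apply]
  exact add_nonneg (by split_ifs <;> positivity) (by split_ifs <;> simp)

theorem signlessLapMatrix_mulVec_apply [NonAssocSemiring R] (v : V) (x : V → R) :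
    (G.signlessLapMatrix R *ᵥ x) v = G.degree v * x v + ∑ u ∈ G.neighborFinset v, x u := by
  rw [signlessLapMatrix, add_mulVec, Pi.add_apply, degMatrix_mulVec_apply, adjMatrix_mulVec_apply]

end SimpleGraph

variable {V : Type*} {G : SimpleGraph V} {M : Finset (Sym2 V)}

noncomputable def matchedSet [Fintype V] (M : Finset (Sym2 V)) : Finset V :=
  univ.filter (matchedVert M)

@[simp]
theorem mem_matchedSet [Fintype V] {v : V} : v ∈ matchedSet M ↔ matchedVert M v := by
  simp [matchedSet]

theorem IsMatchingSet.eq_of_mem_of_mem (hM : IsMatchingSet G M) {e f : Sym2 V} (he : e ∈ M)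
    (hf : f ∈ M) {v : V} (hve : v ∈ e) (hvf : v ∈ f) : e = f := by
  by_contra hne
  exact hM.2 e he f hf hne ⟨v, hve, hvf⟩

theorem IsMatchingSet.card_matchedSet [Fintype V] (hM : IsMatchingSet G M) :
    (matchedSet M).card = 2 * M.card := by
  have hunion : matchedSet M = M.biUnion Sym2.toFinset := by
    ext v; simp [matchedVert]
  rw [hunion, card_biUnion fun e he f hf hne => disjoint_left.2 fun v hve hvf =>
      hne (hM.eq_of_mem_of_mem he hf (Sym2.mem_toFinset.1 hve) (Sym2.mem_toFinset.1 hvf)),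
    sum_congr rfl fun e he => Sym2.card_toFinset_of_not_isDiag e
      (G.not_isDiag_of_mem_edgeSet (hM.1 e he)), sum_const, smul_eq_mul, mul_comm]

theorem IsCompleteDIM.adj_iff_of_not_matched (hM : IsCompleteDIM G M) {v : V}
    (hv : ¬ matchedVert M v) (u : V) : G.Adj v u ↔ matchedVert M u := by
  refine ⟨fun hvu => ?_, fun hu => (hM.2.2 u v hu hv).symm⟩
  by_contra hu
  obtain ⟨f, ⟨hf, w, hwvu, hwf⟩, -⟩ :=
    hM.1.2 _ (G.mem_edgeSet.2 hvu) fun h => hv ⟨_, h, Sym2.mem_mk_left _ _⟩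
  rcases Sym2.mem_iff.1 hwvu with rfl | rfl
  exacts [hv ⟨f, hf, hwf⟩, hu ⟨f, hf, hwf⟩]

theorem IsDIM.exists_partner (hM : IsDIM G M) {v : V} (hv : matchedVert M v) :
    ∃ w, matchedVert M w ∧ ∀ u, matchedVert M u → (G.Adj v u ↔ u = w) := by
  obtain ⟨e, he, hve⟩ := hv
  obtain ⟨w, rfl⟩ := Sym2.mem_iff_exists.1 hve
  refine ⟨w, ⟨_, he, Sym2.mem_mk_right _ _⟩, fun u ⟨f, hf, huf⟩ => ⟨fun hvu => ?_, ?_⟩⟩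
  · have huv : u ≠ v := (G.ne_of_adj hvu).symm
    by_cases hvuM : s(v, u) ∈ M
    · have := hM.1.eq_of_mem_of_mem hvuM he (Sym2.mem_mk_left v u) (Sym2.mem_mk_left v w)
      rcases Sym2.eq_iff.1 this with ⟨-, h⟩ | ⟨-, h⟩
      exacts [h, absurd h huv]
    · obtain ⟨g, -, hg⟩ := hM.2 _ (G.mem_edgeSet.2 hvu) hvuM
      have hfe : f = s(v, w) :=
        (hg f ⟨hf, u, Sym2.mem_mk_right _ _, huf⟩).trans
          (hg _ ⟨he, v, Sym2.mem_mk_left _ _, Sym2.mem_mk_left _ _⟩).symm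
      rw [hfe] at huf
      exact (Sym2.mem_iff.1 huf).resolve_left huv
  · rintro rfl
    exact G.mem_edgeSet.1 (hM.1.1 _ he)

section Neighbours

variable [Fintype V] [DecidableRel G.Adj]

theorem IsCompleteDIM.neighborFinset_of_not_matched (hM : IsCompleteDIM G M) {v : V}
    (hv : ¬ matchedVert M v) : G.neighborFinset v = matchedSet M := by
  ext u
  rw [SimpleGraph.mem_neighborFinset, mem_matchedSet, hM.adj_iff_of_not_matched hv]

theorem IsCompleteDIM.exists_neighborFinset_of_matched [DecidableEq V] (hM : IsCompleteDIM G M)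
    {v : V} (hv : matchedVert M v) :
    ∃ w, matchedVert M w ∧ G.neighborFinset v = insert w (matchedSet M)ᶜ := by
  obtain ⟨w, hw, hadj⟩ := hM.1.exists_partner hv
  refine ⟨w, hw, ?_⟩
  ext u
  rw [SimpleGraph.mem_neighborFinset, mem_insert, mem_compl, mem_matchedSet]
  by_cases hu : matchedVert M u
  · simp [hu, hadj u hu]
  · simp only [hu, not_false_eq_true, or_true, iff_true]
    exact hM.2.2 v u hv hu

end Neighbours

noncomputable def cdimEigenvector (M : Finset (Sym2 V)) (μ : ℝ) (v : V) : ℝ :=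
  if matchedVert M v then μ - 2 * M.card else 2 * M.card

theorem cdimEigenvector_pos (hm : 0 < M.card) {μ : ℝ} (hμ : 2 * M.card < μ) (v : V) :
    0 < cdimEigenvector M μ v := by
  unfold cdimEigenvector
  split_ifs
  · linarith
  · positivity

theorem IsCompleteDIM.signlessLapMatrix_mulVec_cdimEigenvector [Fintype V] [DecidableEq V]
    [DecidableRel G.Adj] (hM : IsCompleteDIM G M) {μ : ℝ}
    (hμ : μ ^ 2 - (Fintype.card V + 2) * μ + 4 * M.card = 0) :
    G.signlessLapMatrix ℝ *ᵥ cdimEigenvector M μ = μ • cdimEigenvector M μ := by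
  have hS : ((matchedSet M).card : ℝ) = 2 * M.card := by exact_mod_cast hM.1.1.card_matchedSet
  have hSc : ((matchedSet M)ᶜ.card : ℝ) = Fintype.card V - 2 * M.card := by
    rw [← hS, eq_sub_iff_add_eq]; exact_mod_cast card_compl_add_card _
  have hsumS : ∑ u ∈ matchedSet M, cdimEigenvector M μ u =
      (matchedSet M).card * (μ - 2 * M.card) := by
    rw [sum_congr rfl fun u hu => by rw [cdimEigenvector, if_pos (mem_matchedSet.1 hu)],
      sum_const, nsmul_eq_mul]
  have hsumSc : ∑ u ∈ (matchedSet M)ᶜ, cdimEigenvector M μ u =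
      (matchedSet M)ᶜ.card * (2 * M.card) := by
    rw [sum_congr rfl fun u hu => by
      rw [cdimEigenvector, if_neg (mem_matchedSet.not.1 (mem_compl.1 hu))], sum_const,
      nsmul_eq_mul]
  ext v
  rw [SimpleGraph.signlessLapMatrix_mulVec_apply, Pi.smul_apply, smul_eq_mul,
    SimpleGraph.degree]
  by_cases hv : matchedVert M v
  · obtain ⟨w, hw, hN⟩ := hM.exists_neighborFinset_of_matched hv
    have hwS : w ∉ (matchedSet M)ᶜ := by simpa using hw
    rw [hN, sum_insert hwS, card_insert_of_notMem hwS, hsumSc, Nat.cast_succ, hSc]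
    simp only [cdimEigenvector, if_pos hv, if_pos hw]
    linear_combination -hμ
  · rw [hM.neighborFinset_of_not_matched hv, hsumS, hS]
    simp only [cdimEigenvector, if_neg hv]
    ring

theorem two_add_sq_sub_sixteen_mul_nonneg {N m : ℝ} (hm : 0 ≤ m) (hN : 2 * m ≤ N) :
    0 ≤ (2 + N) ^ 2 - 16 * m := by
  nlinarith [sq_nonneg (m - 1)]

theorem two_mul_lt_half_add_sqrt {N m : ℝ} (hm : 0 < m) (hN : 2 * m < N) :
    2 * m < (2 + N + √((2 + N) ^ 2 - 16 * m)) / 2 := by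
  suffices 4 * m - 2 - N < √((2 + N) ^ 2 - 16 * m) by linarith
  rcases lt_or_ge (4 * m - 2 - N) 0 with h | h
  · exact h.trans_le (Real.sqrt_nonneg _)
  · rw [Real.lt_sqrt h]
    nlinarith

/-- If `H` is a graph of order `n` with a complete dominating induced matching of size `m`,
then the largest signless Laplacian eigenvalue of `H` is `(2+n+√((2+n)²−16m))/2`. -/
theorem stmt_4 (n m : ℕ) (hm : 0 < m) (hn : 2 * m < n)
    (H : SimpleGraph (Fin n)) [DecidableRel H.Adj]
    (M : Finset (Sym2 (Fin n))) (hM : IsCompleteDIM H M) (hcard : M.card = m) :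
    (2 + (n : ℝ) + Real.sqrt ((2 + (n : ℝ))^2 - 16 * m)) / 2
        ∈ spectrum ℝ (H.degMatrix ℝ + H.adjMatrix ℝ) ∧
      ∀ μ ∈ spectrum ℝ (H.degMatrix ℝ + H.adjMatrix ℝ),
        μ ≤ (2 + (n : ℝ) + Real.sqrt ((2 + (n : ℝ))^2 - 16 * m)) / 2 := by
  subst hcard
  have hm' : (0 : ℝ) < M.card := by exact_mod_cast hm
  have hn' : 2 * (M.card : ℝ) < n := by exact_mod_cast hn
  set μ := (2 + (n : ℝ) + √((2 + (n : ℝ)) ^ 2 - 16 * M.card)) / 2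
  have hroot : μ ^ 2 - (Fintype.card (Fin n) + 2) * μ + 4 * M.card = 0 := by
    rw [Fintype.card_fin]
    linear_combination
      (1 / 4 : ℝ) * Real.sq_sqrt (two_add_sq_sub_sixteen_mul_nonneg hm'.le hn'.le)
  have hpos := cdimEigenvector_pos hm (two_mul_lt_half_add_sqrt hm' hn')
  have heig := hM.signlessLapMatrix_mulVec_cdimEigenvector hroot
  refine ⟨Matrix.mem_spectrum_iff_exists_mulVec_eq_smul.2 ⟨_, ?_, heig⟩, fun μ' hμ' => ?_⟩
  · exact fun h => (hpos ⟨0, by omega⟩).ne' (congrFun h _)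
  · obtain ⟨v, hv, hvμ'⟩ := Matrix.mem_spectrum_iff_exists_mulVec_eq_smul.1 hμ'
    exact (le_abs_self μ').trans <| Matrix.abs_le_of_mulVec_eq_smul_of_pos
      (H.isSymm_signlessLapMatrix ℝ) H.signlessLapMatrix_nonneg hpos heig hv hvμ'
end

section
/- Let H be the join of mK₂ with the empty graph on s = n−2m ≥ 1 vertices, m ≥ 1. Then the signless Laplacian spectrum of H is { (2+n+√((2+n)²−16m))/2, (2+n−√((2+n)²−16m))/2, (n−2m+2) with multiplicity m−1, (n−2m) with multiplicity m, 2m with multiplicity n−2m−1 }. -/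
open Matrix Finset
open scoped Classical

/-- The join of `m K₂` with the empty graph on `s` vertices, vertices labeled so that
the `2m` matched vertices (paired as `{2k, 2k+1}`) come first. -/
def dimJoin (m s : ℕ) : SimpleGraph (Fin (2*m+s)) where
  Adj i j := i ≠ j ∧ (((i:ℕ) < 2*m ∧ (j:ℕ) < 2*m ∧ (i:ℕ)/2 = (j:ℕ)/2) ∨
    ((i:ℕ) < 2*m ∧ 2*m ≤ (j:ℕ)) ∨ (2*m ≤ (i:ℕ) ∧ (j:ℕ) < 2*m))
  symm := by
    constructor
    rintro i j ⟨hne, h⟩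
    refine ⟨hne.symm, ?_⟩
    rcases h with ⟨a,b,c⟩|⟨a,b⟩|⟨a,b⟩
    · exact Or.inl ⟨b, a, c.symm⟩
    · exact Or.inr (Or.inr ⟨b, a⟩)
    · exact Or.inr (Or.inl ⟨b, a⟩)
  loopless := ⟨fun i h => h.1 rfl⟩

open Polynomial
open scoped Kronecker

/-!
Order the vertices as the `m` matched pairs followed by the `s` unmatched ones. Then `t • 1 - Q`
is the block matrix `[[1 ⊗ₖ N, -J], [-J, (t - 2m) • 1]]` with `N = [[t-s-1, -1], [-1, t-s-1]]`
and `J` all-ones. The Schur complement of the lower right block is `1 ⊗ₖ N - (s / (t - 2m)) J`, a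
rank-one perturbation of `1 ⊗ₖ N` along the all-ones vector, which is an eigenvector of `1 ⊗ₖ N`
for `t - s - 2`. The matrix determinant lemma then gives, for `t ∉ {2m, s + 2}`,
`det (t • 1 - Q) = (t-2m)^(s-1) (t-s)^m (t-s-2)^(m-1) ((t-2m)(t-s-2) - 2ms)`,
and the quadratic factor is `t² - (n+2) t + 4m`.
-/

namespace Matrix

variable {m n ι : Type*} [Fintype m] [DecidableEq m] [Fintype n] [DecidableEq n]

theorem det_fromBlocks_smul_one₂₂ {K : Type*} [Field K] (A : Matrix m m K) (B : Matrix m n K)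
    (C : Matrix n m K) {d : K} (hd : d ≠ 0) :
    (fromBlocks A B C (d • 1)).det = d ^ Fintype.card n * (A - d⁻¹ • (B * C)).det := by
  let : Invertible (d • (1 : Matrix n n K)) :=
    ⟨d⁻¹ • 1, by simp [smul_smul, hd], by simp [smul_smul, hd]⟩
  rw [det_fromBlocks₂₂, show ⅟(d • (1 : Matrix n n K)) = d⁻¹ • 1 from rfl, det_smul, det_one,
    mul_one, Matrix.mul_smul, Matrix.mul_one, Matrix.smul_mul]

theorem det_add_replicateCol_mul_replicateRow_of_mulVec_eq {R : Type*} [CommRing R] [Unique ι]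
    {A : Matrix m m R} {u v w : m → R} (h : A *ᵥ w = u) :
    (A + replicateCol ι u * replicateRow ι v).det = A.det * (1 + v ⬝ᵥ w) := by
  have hu : replicateCol ι u = A * replicateCol ι w := by
    ext i j; simp [← h, mulVec, dotProduct, mul_apply]
  nth_rewrite 1 [hu, Matrix.mul_assoc, ← Matrix.mul_one A]
  rw [← Matrix.mul_add, det_mul, det_one_add_replicateCol_mul_replicateRow]

end Matrix

theorem sub_half_add_sqrt_mul_sub_half_sub_sqrt {b d : ℝ} (hd : 0 ≤ d) (t : ℝ) :
    (t - (b + √d) / 2) * (t - (b - √d) / 2) = t ^ 2 - b * t + (b ^ 2 - d) / 4 := by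
  linear_combination (-1 / 4 : ℝ) * Real.sq_sqrt hd

def dimJoinEquiv (m s : ℕ) : (Fin m × Fin 2) ⊕ Fin s ≃ Fin (2 * m + s) :=
  ((Equiv.sumCongr finProdFinEquiv (Equiv.refl _)).trans finSumFinEquiv).trans (finCongr (by ring))

section dimJoin

variable {m s : ℕ}

theorem dimJoinEquiv_inl_val (k : Fin m) (i : Fin 2) :
    (dimJoinEquiv m s (.inl (k, i)) : ℕ) = i + 2 * k := by
  simp [dimJoinEquiv]

theorem dimJoinEquiv_inr_val (j : Fin s) : (dimJoinEquiv m s (.inr j) : ℕ) = 2 * m + j := by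
  simp [dimJoinEquiv]

theorem dimJoin_adj_inl_inl {k k' : Fin m} {i i' : Fin 2} :
    (dimJoin m s).Adj (dimJoinEquiv m s (.inl (k, i))) (dimJoinEquiv m s (.inl (k', i'))) ↔
      k = k' ∧ i ≠ i' := by
  have := k.isLt; have := k'.isLt; have := i.isLt; have := i'.isLt
  simp only [dimJoin, ne_eq, Fin.ext_iff, dimJoinEquiv_inl_val]
  omega

theorem dimJoin_adj_inl_inr (k : Fin m) (i : Fin 2) (j : Fin s) :
    (dimJoin m s).Adj (dimJoinEquiv m s (.inl (k, i))) (dimJoinEquiv m s (.inr j)) := by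
  have := k.isLt; have := i.isLt
  simp only [dimJoin, ne_eq, Fin.ext_iff, dimJoinEquiv_inl_val, dimJoinEquiv_inr_val]
  omega

theorem not_dimJoin_adj_inr_inr (j j' : Fin s) :
    ¬ (dimJoin m s).Adj (dimJoinEquiv m s (.inr j)) (dimJoinEquiv m s (.inr j')) := by
  simp only [dimJoin, ne_eq, Fin.ext_iff, dimJoinEquiv_inr_val]
  omega

variable (m s) in
theorem adjMatrix_dimJoin_submatrix (R : Type*) [NonAssocSemiring R] :
    ((dimJoin m s).adjMatrix R).submatrix (dimJoinEquiv m s) (dimJoinEquiv m s) =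
      fromBlocks (1 ⊗ₖ !![0, 1; 1, 0]) (of fun _ _ => 1) (of fun _ _ => 1) 0 := by
  ext (⟨k, i⟩ | j) (⟨k', i'⟩ | j')
  · by_cases hk : k = k' <;> fin_cases i <;> fin_cases i' <;> simp [dimJoin_adj_inl_inl, hk]
  · simp [dimJoin_adj_inl_inr]
  · simp [(dimJoin_adj_inl_inr _ _ _).symm]
  · simp [not_dimJoin_adj_inr_inr]

theorem dimJoin_degree (x : (Fin m × Fin 2) ⊕ Fin s) :
    (dimJoin m s).degree (dimJoinEquiv m s x) = Sum.elim (fun _ => s + 1) (fun _ => 2 * m) x := by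
  have h := congr_fun (submatrix_mulVec_equiv ((dimJoin m s).adjMatrix ℕ) (Function.const _ 1)
    (dimJoinEquiv m s) (dimJoinEquiv m s)) x
  rw [adjMatrix_dimJoin_submatrix] at h
  simp only [Function.comp_apply, Function.const_comp, SimpleGraph.adjMatrix_mulVec_const_apply,
    mul_one, Nat.cast_id] at h
  rw [← h]
  rcases x with ⟨k, i⟩ | j
  · fin_cases i <;> simp [mulVec, dotProduct, Fintype.sum_prod_type, one_apply, add_comm]
  · simp [mulVec, dotProduct, mul_comm]

end dimJoin

def dimJoinSignlessLaplacianBlocks (m s : ℕ) :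
    Matrix ((Fin m × Fin 2) ⊕ Fin s) ((Fin m × Fin 2) ⊕ Fin s) ℝ :=
  fromBlocks (1 ⊗ₖ !![(s : ℝ) + 1, 1; 1, (s : ℝ) + 1]) (of fun _ _ => 1) (of fun _ _ => 1)
    ((2 * m : ℝ) • 1)

theorem signlessLaplacian_dimJoin_submatrix (m s : ℕ) :
    ((dimJoin m s).degMatrix ℝ + (dimJoin m s).adjMatrix ℝ).submatrix (dimJoinEquiv m s)
      (dimJoinEquiv m s) = dimJoinSignlessLaplacianBlocks m s := by
  rw [submatrix_add, Pi.add_apply, Pi.add_apply, adjMatrix_dimJoin_submatrix,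
    SimpleGraph.degMatrix, submatrix_diagonal_equiv]
  ext (⟨k, i⟩ | j) (⟨k', i'⟩ | j')
  · by_cases hk : k = k' <;> fin_cases i <;> fin_cases i' <;>
      simp [dimJoinSignlessLaplacianBlocks, dimJoin_degree, hk, one_apply]
  · simp [dimJoinSignlessLaplacianBlocks]
  · simp [dimJoinSignlessLaplacianBlocks]
  · by_cases hj : j = j' <;> simp [dimJoinSignlessLaplacianBlocks, dimJoin_degree, hj]

theorem det_scalar_sub_dimJoinSignlessLaplacianBlocks (m s : ℕ) {t : ℝ} (ht₁ : t ≠ 2 * m)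
    (ht₂ : t ≠ s + 2) :
    (scalar _ t - dimJoinSignlessLaplacianBlocks m s).det =
      (t - 2 * m) ^ s * (t - s) ^ m * (t - (s + 2)) ^ m *
        (1 - 2 * m * s / ((t - 2 * m) * (t - (s + 2)))) := by
  have hd : t - 2 * m ≠ 0 := sub_ne_zero.2 ht₁
  have ha : t - (s + 2) ≠ 0 := sub_ne_zero.2 ht₂
  set N : Matrix (Fin 2) (Fin 2) ℝ := !![t - (s + 1), -1; -1, t - (s + 1)]
  have hblocks : scalar _ t - dimJoinSignlessLaplacianBlocks m s =
      fromBlocks (1 ⊗ₖ N) (of fun _ _ => -1) (of fun _ _ => -1) ((t - 2 * m) • 1) := by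
    ext (⟨k, i⟩ | j) (⟨k', i'⟩ | j')
    · by_cases hk : k = k' <;> fin_cases i <;> fin_cases i' <;>
        simp [dimJoinSignlessLaplacianBlocks, N, hk, one_apply]
    · simp [dimJoinSignlessLaplacianBlocks]
    · simp [dimJoinSignlessLaplacianBlocks]
    · by_cases hj : j = j' <;> simp [dimJoinSignlessLaplacianBlocks, hj]
  have hschur : ((1 : Matrix (Fin m) (Fin m) ℝ) ⊗ₖ N) - (t - 2 * m)⁻¹ •
      ((of fun _ _ => -1 : Matrix (Fin m × Fin 2) (Fin s) ℝ) *
        (of fun _ _ => -1 : Matrix (Fin s) (Fin m × Fin 2) ℝ)) =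
      (1 ⊗ₖ N) + replicateCol Unit (fun _ : Fin m × Fin 2 => (1 : ℝ)) *
        replicateRow Unit (fun _ : Fin m × Fin 2 => -(s / (t - 2 * m))) := by
    ext; simp [mul_apply, div_eq_inv_mul, sub_eq_add_neg]
  have hones : ((1 : Matrix (Fin m) (Fin m) ℝ) ⊗ₖ N) *ᵥ (fun _ => (t - (s + 2))⁻¹) =
      fun _ => 1 := by
    have hrow : t - (s + 1) - 1 = t - (s + 2) := by ring
    ext ⟨k, i⟩
    fin_cases i <;> simp [N, mulVec, dotProduct, Fintype.sum_prod_type, one_apply,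
      ← sub_eq_add_neg, neg_add_eq_sub, ← sub_one_mul, hrow, ha]
  rw [hblocks, det_fromBlocks_smul_one₂₂ _ _ _ hd, hschur,
    det_add_replicateCol_mul_replicateRow_of_mulVec_eq hones, det_kronecker, det_one, one_pow,
    one_mul, Fintype.card_fin, det_fin_two_of,
    show (t - (s + 1)) * (t - (s + 1)) - -1 * -1 = (t - s) * (t - (s + 2)) by ring, mul_pow,
    dotProduct, Finset.sum_const, Finset.card_univ, Fintype.card_prod, Fintype.card_fin,
    Fintype.card_fin, nsmul_eq_mul, Nat.cast_mul, Nat.cast_ofNat]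
  field_simp
  ring

theorem eval_charpoly_dimJoinSignlessLaplacianBlocks {m s : ℕ} (hm : 1 ≤ m) (hs : 1 ≤ s) {t : ℝ}
    (ht₁ : t ≠ 2 * m) (ht₂ : t ≠ s + 2) :
    (dimJoinSignlessLaplacianBlocks m s).charpoly.eval t =
      (t ^ 2 - (2 * m + s + 2) * t + 4 * m) * (t - (s + 2)) ^ (m - 1) * (t - s) ^ m *
        (t - 2 * m) ^ (s - 1) := by
  have hd : t - 2 * m ≠ 0 := sub_ne_zero.2 ht₁
  have ha : t - (s + 2) ≠ 0 := sub_ne_zero.2 ht₂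
  rw [eval_charpoly, det_scalar_sub_dimJoinSignlessLaplacianBlocks m s ht₁ ht₂,
    ← pow_sub_one_mul (by omega : s ≠ 0), ← pow_sub_one_mul (by omega : m ≠ 0) (t - (s + 2))]
  field_simp
  ring

/-- Signless Laplacian spectrum of `H = mK₂ ∨ \bar{K}_s` (`n = 2m+s`):
`{(2+n±√((2+n)²−16m))/2, (n−2m+2)^{[m−1]}, (n−2m)^{[m]}, (2m)^{[n−2m−1]}}`. -/
theorem stmt_7 (m s : ℕ) (hm : 1 ≤ m) (hs : 1 ≤ s) :
    ((dimJoin m s).degMatrix ℝ + (dimJoin m s).adjMatrix ℝ).charpoly.roots =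
      {(2 + ((2 * m + s : ℕ) : ℝ) +
          Real.sqrt ((2 + ((2 * m + s : ℕ) : ℝ))^2 - 16 * m)) / 2,
       (2 + ((2 * m + s : ℕ) : ℝ) -
          Real.sqrt ((2 + ((2 * m + s : ℕ) : ℝ))^2 - 16 * m)) / 2} +
      Multiset.replicate (m - 1) (((2 * m + s : ℕ) : ℝ) - 2 * m + 2) +
      Multiset.replicate m (((2 * m + s : ℕ) : ℝ) - 2 * m) +
      Multiset.replicate (s - 1) ((2 * m : ℕ) : ℝ) := by
  refine (congrArg roots ?_).trans (roots_multiset_prod_X_sub_C _)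
  rw [← charpoly_reindex (dimJoinEquiv m s).symm, reindex_apply, Equiv.symm_symm,
    signlessLaplacian_dimJoin_submatrix]
  refine eq_of_infinite_eval_eq _ _
    ((Set.toFinite ({2 * (m : ℝ), (s : ℝ) + 2} : Set ℝ)).infinite_compl.mono ?_)
  intro t ht
  simp only [Set.mem_compl_iff, Set.mem_insert_iff, Set.mem_singleton_iff, not_or] at ht
  have hdisc : 0 ≤ (2 + ((2 * m + s : ℕ) : ℝ)) ^ 2 - 16 * m := by
    push_cast
    nlinarith [sq_nonneg ((m : ℝ) - 1), (s.cast_nonneg : (0 : ℝ) ≤ s)]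
  rw [Set.mem_ofPred_eq, eval_charpoly_dimJoinSignlessLaplacianBlocks hm hs ht.1 ht.2,
    eval_multiset_prod, Multiset.map_map]
  simp only [Function.comp_def, eval_sub, eval_X, eval_C, Multiset.insert_eq_cons,
    Multiset.map_add, Multiset.map_cons, Multiset.map_singleton, Multiset.map_replicate,
    Multiset.prod_add, Multiset.prod_cons, Multiset.prod_singleton, Multiset.prod_replicate]
  rw [sub_half_add_sqrt_mul_sub_half_sub_sqrt hdisc]
  push_cast
  ring
end

section
/- Let G be a graph of order n having a dominating induced matching M with |M| = m. Then the spectral radius ρ of the adjacency matrix of G satisfies ρ ≤ (1 + √(1 + 8m(n−2m)))/2. -/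
open Matrix Finset
open scoped Classical

/-! Every edge of `G` either lies in `M` or joins a matched vertex to an unmatched one, so `G` is
a subgraph of the join `H` of the matching with the independent set of unmatched vertices. For an
eigenvector `x` of `ρ`, `ρ ‖x‖² = xᵀ A_G x ≤ |x|ᵀ A_H |x|`. If `P` and `Q` are the squared norms of
`|x|` on the `2m` matched and the `n - 2m` unmatched vertices, Cauchy–Schwarz bounds
`|x|ᵀ A_H |x|` by `P + 2 r √(P Q)` with `r² = 2m(n - 2m)`, and this is at most `λ (P + Q)` where
`λ = (1 + √(1 + 4r²)) / 2` is the largest eigenvalue of the quotient matrix `[[1, r], [r, 0]]`. -/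

theorem Matrix.exists_mulVec_eq_smul_of_mem_spectrum {n K : Type*} [Fintype n] [DecidableEq n]
    [Field K] {A : Matrix n n K} {μ : K} (h : μ ∈ spectrum K A) : ∃ x ≠ 0, A *ᵥ x = μ • x := by
  rw [← Matrix.spectrum_toLin', ← Module.End.hasEigenvalue_iff_mem_spectrum] at h
  obtain ⟨x, hx⟩ := h.exists_hasEigenvector
  exact ⟨x, hx.2, by simpa using hx.apply_eq_smul⟩

-- `l` is the largest eigenvalue of `[[1, r], [r, 0]]`; the defect is `(r p - l q)² / l`.
theorem sq_add_two_mul_mul_le {l r p q : ℝ} (hl : 0 < l) (h : l ^ 2 = l + r ^ 2) :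
    p ^ 2 + 2 * r * p * q ≤ l * (p ^ 2 + q ^ 2) := by
  have hsq : l * (l * (p ^ 2 + q ^ 2) - (p ^ 2 + 2 * r * p * q)) = (r * p - l * q) ^ 2 := by
    linear_combination p ^ 2 * h
  exact sub_nonneg.mp ((mul_nonneg_iff_of_pos_left hl).mp (hsq ▸ sq_nonneg _))

theorem add_two_mul_le_of_sq_le {a b P Q S T : ℝ} (ha : 0 ≤ a) (hb : 0 ≤ b) (hP : 0 ≤ P)
    (hQ : 0 ≤ Q) (hS : S ^ 2 ≤ a * P) (hT : T ^ 2 ≤ b * Q) :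
    P + 2 * (S * T) ≤ (1 + √(1 + 4 * (a * b))) / 2 * (P + Q) := by
  set l := (1 + √(1 + 4 * (a * b))) / 2
  have hl : l ^ 2 = l + √(a * b) ^ 2 := by
    have h4 : √(1 + 4 * (a * b)) ^ 2 = 1 + 4 * (a * b) := Real.sq_sqrt (by positivity)
    rw [Real.sq_sqrt (by positivity)]
    linear_combination h4 / 4
  have hST : S * T ≤ √(a * b) * √P * √Q :=
    calc S * T ≤ |S| * |T| := (abs_mul S T).symm ▸ le_abs_self _
      _ ≤ √(a * P) * √(b * Q) := by gcongr <;> exact Real.abs_le_sqrt ‹_›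
      _ = √(a * b) * √P * √Q := by
        rw [Real.sqrt_mul ha, Real.sqrt_mul hb, Real.sqrt_mul ha]; ring
  have key := sq_add_two_mul_mul_le (p := √P) (q := √Q) (by positivity) hl
  rw [Real.sq_sqrt hP, Real.sq_sqrt hQ] at key
  linarith

theorem Finset.sum_sum_ite_and_mul {V R : Type*} [Fintype V] [CommSemiring R] (p q : V → Prop)
    [DecidablePred p] [DecidablePred q] (y : V → R) :
    ∑ u, ∑ v, (if p u ∧ q v then y u * y v else 0) = (∑ u with p u, y u) * ∑ v with q v, y v := by
  simp only [sum_filter, sum_mul_sum, ite_zero_mul_ite_zero]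

section

variable {V R : Type*} [Fintype V] [CommRing R]

theorem SimpleGraph.dotProduct_adjMatrix_mulVec (G : SimpleGraph V) [DecidableRel G.Adj]
    (x : V → R) : x ⬝ᵥ (G.adjMatrix R *ᵥ x) = ∑ u, ∑ v, if G.Adj u v then x u * x v else 0 := by
  simp only [dotProduct, mulVec, SimpleGraph.adjMatrix_apply, mul_sum]
  refine sum_congr rfl fun u _ => sum_congr rfl fun v _ => ?_
  split_ifs <;> ring

variable [LinearOrder R] [IsStrictOrderedRing R]

theorem SimpleGraph.dotProduct_adjMatrix_mulVec_le_of_le {G H : SimpleGraph V}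
    [DecidableRel G.Adj] [DecidableRel H.Adj] (hGH : G ≤ H) (x : V → R) :
    x ⬝ᵥ (G.adjMatrix R *ᵥ x) ≤ |x| ⬝ᵥ (H.adjMatrix R *ᵥ |x|) := by
  simp only [SimpleGraph.dotProduct_adjMatrix_mulVec, Pi.abs_apply]
  refine sum_le_sum fun u _ => sum_le_sum fun v _ => ?_
  split_ifs with hG hH hH
  · exact (abs_mul (x u) (x v)) ▸ le_abs_self _
  · exact absurd (hGH hG) hH
  · positivity
  · rfl

end

-- The join `mK₂ ∨ (n - 2m)K₁` when `M` is a matching of size `m` in a graph of order `n`.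
def matchingJoin {V : Type*} (M : Finset (Sym2 V)) : SimpleGraph V where
  Adj u v := u ≠ v ∧ (s(u, v) ∈ M ∨ Xor (matchedVert M u) (matchedVert M v))
  symm := ⟨fun _ _ h => ⟨h.1.symm, by rw [Sym2.eq_swap, xor_comm]; exact h.2⟩⟩
  loopless := ⟨fun _ h => h.1 rfl⟩

section

variable {V : Type*} {G : SimpleGraph V} {M : Finset (Sym2 V)}

theorem IsDIM.matchedVert_or_matchedVert (hM : IsDIM G M) {u v : V} (huv : G.Adj u v) :
    matchedVert M u ∨ matchedVert M v := by
  by_cases hm : s(u, v) ∈ M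
  · exact Or.inl ⟨_, hm, Sym2.mem_mk_left u v⟩
  obtain ⟨f, ⟨hfM, w, hw, hwf⟩, -⟩ := hM.2 _ (G.mem_edgeSet.mpr huv) hm
  rcases Sym2.mem_iff.mp hw with rfl | rfl
  exacts [Or.inl ⟨f, hfM, hwf⟩, Or.inr ⟨f, hfM, hwf⟩]

theorem IsDIM.mem_of_matchedVert_of_matchedVert (hM : IsDIM G M) {u v : V} (huv : G.Adj u v)
    (hu : matchedVert M u) (hv : matchedVert M v) : s(u, v) ∈ M := by
  by_contra hm
  obtain ⟨e, he, hue⟩ := hu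
  obtain ⟨f, hf, hvf⟩ := hv
  obtain ⟨_, -, huniq⟩ := hM.2 _ (G.mem_edgeSet.mpr huv) hm
  have hef : e = f :=
    (huniq e ⟨he, u, Sym2.mem_mk_left u v, hue⟩).trans
      (huniq f ⟨hf, v, Sym2.mem_mk_right u v, hvf⟩).symm
  subst hef
  exact hm ((Sym2.mem_and_mem_iff huv.ne).mp ⟨hue, hvf⟩ ▸ he)

theorem IsDIM.le_matchingJoin (hM : IsDIM G M) : G ≤ matchingJoin M := by
  intro u v huv
  refine ⟨huv.ne, ?_⟩
  have hcover := hM.matchedVert_or_matchedVert huv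
  by_cases hu : matchedVert M u <;> by_cases hv : matchedVert M v
  · exact Or.inl (hM.mem_of_matchedVert_of_matchedVert huv hu hv)
  all_goals simp_all [xor_def]

end

section

variable {V : Type*} [Fintype V] {G : SimpleGraph V} {M : Finset (Sym2 V)}

theorem IsMatchingSet.card_filter_matchedVert (hM : IsMatchingSet G M) :
    #{v | matchedVert M v} = 2 * #M := by
  have hunion : ({v | matchedVert M v} : Finset V) = M.biUnion fun e => {v | v ∈ e} := by
    ext v
    simp only [mem_filter, mem_univ, true_and, mem_biUnion]
    rfl
  have hpair : ∀ e ∈ M, #({v | v ∈ e} : Finset V) = 2 := by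
    intro e he
    induction e using Sym2.ind with
    | _ a b =>
      have hab : a ≠ b := (G.mem_edgeSet.mp (hM.1 _ he)).ne
      rw [show ({v | v ∈ s(a, b)} : Finset V) = {a, b} by ext; simp, card_pair hab]
  rw [hunion, card_biUnion fun e he f hf hef => disjoint_filter.mpr fun v _ hve hvf =>
    hM.2 e he f hf hef ⟨v, hve, hvf⟩, sum_congr rfl hpair, sum_const, smul_eq_mul, mul_comm]

theorem IsMatchingSet.card_filter_mem_le_one (hM : IsMatchingSet G M) (u : V) :
    #{v | s(u, v) ∈ M} ≤ 1 := by
  refine card_le_one.mpr fun v hv w hw => ?_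
  rw [mem_filter] at hv hw
  by_contra hvw
  exact hM.2 _ hv.2 _ hw.2 (fun h => hvw (Sym2.congr_right.mp h))
    ⟨u, Sym2.mem_mk_left u v, Sym2.mem_mk_left u w⟩

theorem IsMatchingSet.sum_sum_ite_mem_mul_le (hM : IsMatchingSet G M) (y : V → ℝ) :
    ∑ u, ∑ v, (if s(u, v) ∈ M then y u * y v else 0) ≤ ∑ u with matchedVert M u, y u ^ 2 := by
  have hswap : ∑ u, ∑ v, (if s(u, v) ∈ M then y v ^ 2 else 0) =
      ∑ u, ∑ v, (if s(u, v) ∈ M then y u ^ 2 else 0) := by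
    rw [sum_comm]; simp only [Sym2.eq_swap]
  calc ∑ u, ∑ v, (if s(u, v) ∈ M then y u * y v else 0)
      ≤ ∑ u, ∑ v, ((if s(u, v) ∈ M then y u ^ 2 else 0) +
          (if s(u, v) ∈ M then y v ^ 2 else 0)) / 2 := by
        refine sum_le_sum fun u _ => sum_le_sum fun v _ => ?_
        split_ifs
        · nlinarith [sq_nonneg (y u - y v)]
        · simp
    _ = (∑ u, ∑ v, (if s(u, v) ∈ M then y u ^ 2 else 0) +
          ∑ u, ∑ v, (if s(u, v) ∈ M then y v ^ 2 else 0)) / 2 := by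
        simp only [← sum_div, sum_add_distrib]
    _ = ∑ u, #{v | s(u, v) ∈ M} * y u ^ 2 := by
        rw [hswap, add_self_div_two]
        exact sum_congr rfl fun u _ => by rw [← sum_filter, sum_const, nsmul_eq_mul]
    _ ≤ ∑ u, if matchedVert M u then y u ^ 2 else 0 := by
        refine sum_le_sum fun u _ => ?_
        split_ifs with hu
        · exact mul_le_of_le_one_left (sq_nonneg _) (by exact_mod_cast hM.card_filter_mem_le_one u)
        · have : ({v | s(u, v) ∈ M} : Finset V) = ∅ :=
            filter_eq_empty_iff.mpr fun v _ hv => hu ⟨_, hv, Sym2.mem_mk_left u v⟩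
          simp [this]
    _ = ∑ u with matchedVert M u, y u ^ 2 := (sum_filter _ _).symm

theorem IsMatchingSet.dotProduct_matchingJoin_mulVec_le_of_nonneg (hM : IsMatchingSet G M)
    {y : V → ℝ} (hy : 0 ≤ y) :
    y ⬝ᵥ ((matchingJoin M).adjMatrix ℝ *ᵥ y) ≤ ∑ u with matchedVert M u, y u ^ 2 +
      2 * ((∑ u with matchedVert M u, y u) * ∑ u with ¬matchedVert M u, y u) := by
  have hcross := sum_sum_ite_and_mul (fun u => matchedVert M u) (fun u => ¬matchedVert M u) y
  have hcross' := sum_sum_ite_and_mul (fun u => ¬matchedVert M u) (fun u => matchedVert M u) y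
  have hsplit : ∑ u, ∑ v, (if (matchingJoin M).Adj u v then y u * y v else 0) ≤
      ∑ u, ∑ v, ((if s(u, v) ∈ M then y u * y v else 0) +
        (if matchedVert M u ∧ ¬matchedVert M v then y u * y v else 0) +
        (if ¬matchedVert M u ∧ matchedVert M v then y u * y v else 0)) := by
    refine sum_le_sum fun u _ => sum_le_sum fun v _ => ?_
    have hyuv := mul_nonneg (hy u) (hy v)
    simp only [matchingJoin, xor_def]
    split_ifs <;> simp_all
  simp only [sum_add_distrib] at hsplit
  rw [SimpleGraph.dotProduct_adjMatrix_mulVec]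
  linarith [hM.sum_sum_ite_mem_mul_le y]

theorem IsMatchingSet.dotProduct_matchingJoin_mulVec_le (hM : IsMatchingSet G M) {y : V → ℝ}
    (hy : 0 ≤ y) :
    y ⬝ᵥ ((matchingJoin M).adjMatrix ℝ *ᵥ y) ≤
      (1 + √(1 + 8 * #M * ((Fintype.card V : ℝ) - 2 * #M))) / 2 * (y ⬝ᵥ y) := by
  have hmatched : (#{v | matchedVert M v} : ℝ) = 2 * #M := by
    exact_mod_cast hM.card_filter_matchedVert
  have hunmatched : (#{v | ¬matchedVert M v} : ℝ) = Fintype.card V - 2 * #M := by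
    rw [← hmatched, eq_sub_iff_add_eq, add_comm]
    exact_mod_cast card_filter_add_card_filter_not _
  have hyy : y ⬝ᵥ y = ∑ u with matchedVert M u, y u ^ 2 + ∑ u with ¬matchedVert M u, y u ^ 2 := by
    rw [sum_filter_add_sum_filter_not]; simp only [dotProduct, sq]
  calc y ⬝ᵥ ((matchingJoin M).adjMatrix ℝ *ᵥ y)
      ≤ ∑ u with matchedVert M u, y u ^ 2 +
          2 * ((∑ u with matchedVert M u, y u) * ∑ u with ¬matchedVert M u, y u) :=
        hM.dotProduct_matchingJoin_mulVec_le_of_nonneg hy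
    _ ≤ (1 + √(1 + 4 * (#{v | matchedVert M v} * #{v | ¬matchedVert M v}))) / 2 *
          (∑ u with matchedVert M u, y u ^ 2 + ∑ u with ¬matchedVert M u, y u ^ 2) :=
        add_two_mul_le_of_sq_le (by positivity) (by positivity)
          (sum_nonneg fun _ _ => sq_nonneg _) (sum_nonneg fun _ _ => sq_nonneg _)
          (sq_sum_le_card_mul_sum_sq ..) (sq_sum_le_card_mul_sum_sq ..)
    _ = _ := by rw [hmatched, hunmatched, hyy]; ring_nf

end

theorem stmt_8_general (n m : ℕ) (G : SimpleGraph (Fin n)) [DecidableRel G.Adj]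
    (M : Finset (Sym2 (Fin n))) (hM : IsDIM G M) (hcard : M.card = m)
    (ρ : ℝ) (hρ₁ : ρ ∈ spectrum ℝ (G.adjMatrix ℝ)) :
    ρ ≤ (1 + Real.sqrt (1 + 8 * m * ((n : ℝ) - 2 * m))) / 2 := by
  obtain ⟨x, hx0, hx⟩ := Matrix.exists_mulVec_eq_smul_of_mem_spectrum hρ₁
  have hxx : 0 < x ⬝ᵥ x :=
    (sum_nonneg fun i _ => mul_self_nonneg (x i)).lt_of_ne' (dotProduct_self_eq_zero.not.mpr hx0)
  have hbound := hM.1.dotProduct_matchingJoin_mulVec_le (abs_nonneg x)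
  rw [Fintype.card_fin, hcard] at hbound
  refine le_of_mul_le_mul_right ?_ hxx
  calc ρ * (x ⬝ᵥ x) = x ⬝ᵥ (G.adjMatrix ℝ *ᵥ x) := by rw [hx, dotProduct_smul, smul_eq_mul]
    _ ≤ |x| ⬝ᵥ ((matchingJoin M).adjMatrix ℝ *ᵥ |x|) :=
      SimpleGraph.dotProduct_adjMatrix_mulVec_le_of_le hM.le_matchingJoin x
    _ ≤ _ := hbound
    _ = _ := by simp [dotProduct]

/-- If `G` has order `n` and a dominating induced matching of size `m`, then its
adjacency spectral radius satisfies `ρ ≤ (1+√(1+8m(n−2m)))/2`. -/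
theorem stmt_8 (n m : ℕ) (G : SimpleGraph (Fin n)) [DecidableRel G.Adj]
    (M : Finset (Sym2 (Fin n))) (hM : IsDIM G M) (hcard : M.card = m)
    (ρ : ℝ) (hρ₁ : ρ ∈ spectrum ℝ (G.adjMatrix ℝ))
    (hρ₂ : ∀ μ ∈ spectrum ℝ (G.adjMatrix ℝ), μ ≤ ρ) :
    ρ ≤ (1 + Real.sqrt (1 + 8 * m * ((n : ℝ) - 2 * m))) / 2 :=
  stmt_8_general n m G M hM hcard ρ hρ₁
end

section
/- Let G be a graph of order n with minimum degree δ ≥ 1, a dominating induced matching M of size m, and let μ₁ be the largest Laplacian eigenvalue of G. Then m ≥ (tr(L(G)) − n(μ₁ − 2δ))/(2(2δ + 1)), where tr(L(G)) = Σ_v d(v) = 2|E(G)|. -/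
open Matrix Finset
open scoped Classical

/-!
Let `x` be `1` on `V(M)` and `-1` on the independent set `S`. Every matched vertex has exactly
one matched neighbour and every neighbour of a vertex of `S` is matched, so `(L x)_v` equals
`2 (d(v) - 1)` on `V(M)` and `-2 d(v)` on `S`. The entries of `L x` sum to zero because `L` is
symmetric with zero row sums; this yields `tr L = 2m + 2 Σ_{v∈S} d(v)`, while
`xᵀ L x = 4 Σ_{v∈S} d(v) ≤ μ₁ ‖x‖² = n μ₁`. Bounding `Σ_{v∈S} d(v) ≥ (n - 2m) δ` finishes.
-/

open scoped Pointwise in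
theorem Matrix.IsHermitian.dotProduct_mulVec_le {ι : Type*} [Fintype ι] [DecidableEq ι]
    {A : Matrix ι ι ℝ} (hA : A.IsHermitian) {μ : ℝ} (hμ : ∀ ν ∈ spectrum ℝ A, ν ≤ μ)
    (x : ι → ℝ) : x ⬝ᵥ A *ᵥ x ≤ μ * (x ⬝ᵥ x) := by
  have hpsd : (algebraMap ℝ (Matrix ι ι ℝ) μ - A).PosSemidef := by
    refine posSemidef_iff_isHermitian_and_spectrum_nonneg.mpr ⟨?_, ?_⟩
    · exact IsSelfAdjoint.sub (.algebraMap _ (.all μ)) hA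
    · rw [← spectrum.singleton_sub_eq]
      rintro _ ⟨_, rfl, ν, hν, rfl⟩
      exact sub_nonneg.mpr (hμ ν hν)
  have := hpsd.dotProduct_mulVec_nonneg x
  simp only [star_trivial, Algebra.algebraMap_eq_smul_one, sub_mulVec, smul_mulVec, one_mulVec,
    dotProduct_sub, dotProduct_smul, smul_eq_mul] at this
  linarith

theorem SimpleGraph.sum_lapMatrix_mulVec {V : Type*} [Fintype V] [DecidableEq V]
    (G : SimpleGraph V) [DecidableRel G.Adj] (x : V → ℝ) : ∑ v, (G.lapMatrix ℝ *ᵥ x) v = 0 := by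
  calc ∑ v, (G.lapMatrix ℝ *ᵥ x) v = (fun _ => 1) ⬝ᵥ G.lapMatrix ℝ *ᵥ x := by
        simp [dotProduct]
    _ = (G.lapMatrix ℝ *ᵥ fun _ => 1) ⬝ᵥ x := by
        rw [dotProduct_mulVec, ← mulVec_transpose, (G.isSymm_lapMatrix ℝ).eq]
    _ = 0 := by rw [G.lapMatrix_mulVec_const_eq_zero, zero_dotProduct]

theorem SimpleGraph.trace_lapMatrix {V : Type*} [Fintype V] [DecidableEq V] (R : Type*)
    [AddCommGroupWithOne R] (G : SimpleGraph V) [DecidableRel G.Adj] :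
    (G.lapMatrix R).trace = ∑ v, (G.degree v : R) := by
  simp [Matrix.trace, SimpleGraph.lapMatrix, SimpleGraph.degMatrix]

theorem IsMatchingSet.card_filter_matchedVert_s17 {V : Type*} [Fintype V] {G : SimpleGraph V}
    {M : Finset (Sym2 V)} (hM : IsMatchingSet G M) :
    #(univ.filter (matchedVert M)) = 2 * #M := by
  have hunion : univ.filter (matchedVert M) = M.biUnion Sym2.toFinset := by
    ext v
    simp [matchedVert]
  rw [hunion, card_biUnion, sum_const_nat, mul_comm]
  · exact fun e he =>
      Sym2.card_toFinset_of_not_isDiag e (G.not_isDiag_of_mem_edgeSet (hM.1 e he))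
  · intro e he f hf hef
    simp only [Function.onFun, Finset.disjoint_left, Sym2.mem_toFinset]
    exact fun v hve hvf => hM.2 e he f hf hef ⟨v, hve, hvf⟩

noncomputable def matchedSign {V : Type*} (M : Finset (Sym2 V)) (v : V) : ℝ :=
  if matchedVert M v then 1 else -1

theorem sum_matchedSign {V : Type*} (M : Finset (Sym2 V)) (s : Finset V) :
    ∑ v ∈ s, matchedSign M v = 2 * #(s.filter (matchedVert M)) - #s := by
  rw [← card_filter_add_card_filter_not (s := s) (matchedVert M)]
  simp only [matchedSign, sum_ite, sum_const, nsmul_eq_mul]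
  push_cast
  ring

theorem matchedSign_dotProduct_self {V : Type*} [Fintype V] (M : Finset (Sym2 V)) :
    matchedSign M ⬝ᵥ matchedSign M = Fintype.card V := by
  simp [dotProduct, matchedSign, apply_ite (fun x : ℝ => x * x)]

namespace IsDIM

variable {V : Type*} {G : SimpleGraph V} {M : Finset (Sym2 V)}

theorem matchedVert_of_adj (hM : IsDIM G M) {u v : V} (huv : G.Adj u v)
    (hu : ¬ matchedVert M u) : matchedVert M v := by
  obtain ⟨f, ⟨hf, w, hw, hwf⟩, -⟩ :=
    hM.2 s(u, v) huv fun h => hu ⟨_, h, Sym2.mem_mk_left u v⟩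
  rcases Sym2.mem_iff.mp hw with rfl | rfl
  · exact absurd ⟨f, hf, hwf⟩ hu
  · exact ⟨f, hf, hwf⟩

theorem mk_mem_of_adj (hM : IsDIM G M) {u v : V} (huv : G.Adj u v)
    (hu : matchedVert M u) (hv : matchedVert M v) : s(u, v) ∈ M := by
  by_contra huvM
  obtain ⟨f, -, huniq⟩ := hM.2 s(u, v) huv huvM
  obtain ⟨e, he, hue⟩ := hu
  obtain ⟨e', he', hve'⟩ := hv
  obtain rfl := huniq e ⟨he, u, Sym2.mem_mk_left u v, hue⟩
  obtain rfl := huniq e' ⟨he', v, Sym2.mem_mk_right u v, hve'⟩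
  rw [Sym2.eq_of_ne_mem huv.ne (Sym2.mem_mk_left u v) (Sym2.mem_mk_right u v) hue hve'] at huvM
  exact huvM he

variable [Fintype V] [DecidableRel G.Adj]

theorem card_neighborFinset_filter_matchedVert (hM : IsDIM G M) {v : V}
    (hv : matchedVert M v) : #((G.neighborFinset v).filter (matchedVert M)) = 1 := by
  obtain ⟨e, he, hve⟩ := hv
  obtain ⟨w, rfl⟩ := Sym2.mem_iff_exists.mp hve
  refine card_eq_one.mpr ⟨w, ?_⟩
  ext u
  simp only [mem_filter, SimpleGraph.mem_neighborFinset, mem_singleton]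
  constructor
  · rintro ⟨hvu, hu⟩
    have hvuM := hM.mk_mem_of_adj hvu ⟨_, he, hve⟩ hu
    by_contra huw
    exact hM.1.2 _ hvuM _ he (fun h => huw (Sym2.congr_right.mp h))
      ⟨v, Sym2.mem_mk_left v u, hve⟩
  · rintro rfl
    exact ⟨hM.1.1 _ he, _, he, Sym2.mem_mk_right v u⟩

variable [DecidableEq V]

theorem lapMatrix_mulVec_matchedSign (hM : IsDIM G M) (v : V) :
    (G.lapMatrix ℝ *ᵥ matchedSign M) v =
      if matchedVert M v then 2 * ((G.degree v : ℝ) - 1) else -2 * G.degree v := by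
  rw [G.lapMatrix_mulVec_apply, sum_matchedSign, G.card_neighborFinset_eq_degree]
  by_cases hv : matchedVert M v
  · rw [hM.card_neighborFinset_filter_matchedVert hv]
    simp only [matchedSign, hv, if_true]
    ring
  · have hall : (G.neighborFinset v).filter (matchedVert M) = G.neighborFinset v :=
      filter_true_of_mem fun u hu => hM.matchedVert_of_adj ((G.mem_neighborFinset v u).mp hu) hv
    rw [hall, G.card_neighborFinset_eq_degree]
    simp only [matchedSign, hv, if_false]
    ring

theorem sum_degree_eq (hM : IsDIM G M) :
    ∑ v, (G.degree v : ℝ) =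
      2 * #M + 2 * ∑ v ∈ univ.filter (¬ matchedVert M ·), (G.degree v : ℝ) := by
  have hzero := G.sum_lapMatrix_mulVec (matchedSign M)
  simp only [hM.lapMatrix_mulVec_matchedSign, sum_ite, ← mul_sum, sum_sub_distrib, sum_const,
    nsmul_eq_mul, mul_one, hM.1.card_filter_matchedVert_s17] at hzero
  rw [← sum_filter_add_sum_filter_not univ (matchedVert M)]
  push_cast at hzero
  linarith

theorem matchedSign_dotProduct_lapMatrix_mulVec (hM : IsDIM G M) :
    matchedSign M ⬝ᵥ G.lapMatrix ℝ *ᵥ matchedSign M =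
      4 * ∑ v ∈ univ.filter (¬ matchedVert M ·), (G.degree v : ℝ) := by
  calc matchedSign M ⬝ᵥ G.lapMatrix ℝ *ᵥ matchedSign M
      = ∑ v, ((G.lapMatrix ℝ *ᵥ matchedSign M) v +
          if ¬ matchedVert M v then 4 * (G.degree v : ℝ) else 0) := by
        refine sum_congr rfl fun v _ => ?_
        by_cases hv : matchedVert M v <;>
          simp only [matchedSign, hM.lapMatrix_mulVec_matchedSign, hv, if_true, if_false,
            not_true, not_false_eq_true] <;> ring
    _ = 4 * ∑ v ∈ univ.filter (¬ matchedVert M ·), (G.degree v : ℝ) := by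
        rw [sum_add_distrib, G.sum_lapMatrix_mulVec, zero_add, mul_sum, sum_filter]

end IsDIM

theorem stmt_17_general (n m : ℕ) (G : SimpleGraph (Fin n)) [DecidableRel G.Adj]
    (M : Finset (Sym2 (Fin n))) (hM : IsDIM G M) (hcard : M.card = m)
    (μ₁ : ℝ)
    (hμ₂ : ∀ μ ∈ spectrum ℝ (G.lapMatrix ℝ), μ ≤ μ₁) :
    ((G.lapMatrix ℝ).trace - (n : ℝ) * (μ₁ - 2 * (G.minDegree : ℝ)))
        / (2 * (2 * (G.minDegree : ℝ) + 1)) ≤ (m : ℝ) := by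
  subst hcard
  set S := univ.filter (¬ matchedVert M ·)
  have hrayleigh : 4 * ∑ v ∈ S, (G.degree v : ℝ) ≤ μ₁ * n := by
    simpa [hM.matchedSign_dotProduct_lapMatrix_mulVec, matchedSign_dotProduct_self] using
      (G.isHermitian_lapMatrix ℝ).dotProduct_mulVec_le hμ₂ (matchedSign M)
  have hcardS : (#S : ℝ) = n - 2 * #M := by
    have := card_filter_add_card_filter_not (s := univ) (matchedVert M)
    rw [hM.1.card_filter_matchedVert_s17, card_univ, Fintype.card_fin] at this
    rw [eq_sub_iff_add_eq']
    exact_mod_cast this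
  have hdegS : (n - 2 * #M : ℝ) * G.minDegree ≤ ∑ v ∈ S, (G.degree v : ℝ) := by
    rw [← hcardS]
    simpa using card_nsmul_le_sum S _ _ fun v _ =>
      (Nat.cast_le (α := ℝ)).mpr (G.minDegree_le_degree v)
  rw [G.trace_lapMatrix ℝ, hM.sum_degree_eq, div_le_iff₀ (by positivity)]
  linarith

/-- If `G` has order `n`, minimum degree `δ ≥ 1`, a DIM of size `m`, and largest
Laplacian eigenvalue `μ₁`, then `m ≥ (tr(L(G)) − n(μ₁ − 2δ))/(2(2δ+1))`. -/
theorem stmt_17 (n m : ℕ) (G : SimpleGraph (Fin n)) [DecidableRel G.Adj]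
    (hδ : 1 ≤ G.minDegree)
    (M : Finset (Sym2 (Fin n))) (hM : IsDIM G M) (hcard : M.card = m)
    (μ₁ : ℝ) (hμ₁ : μ₁ ∈ spectrum ℝ (G.lapMatrix ℝ))
    (hμ₂ : ∀ μ ∈ spectrum ℝ (G.lapMatrix ℝ), μ ≤ μ₁) :
    ((G.lapMatrix ℝ).trace - (n : ℝ) * (μ₁ - 2 * (G.minDegree : ℝ)))
        / (2 * (2 * (G.minDegree : ℝ) + 1)) ≤ (m : ℝ) :=
  stmt_17_general n m G M hM hcard μ₁ hμ₂
end
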